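/- For any m×n real matrix A with ‖A‖_∞ ≤ 1, there exist a sequence of partitions {𝒫_j}_{j≥1} of {1,…,m} and a sequence of partitions {𝒬_j}_{j≥1} of {1,…,n} such that for each j: (1) 𝒫_{j+1} refines 𝒫_j and 𝒬_{j+1} refines 𝒬_j; (2) |𝒫_j| and |𝒬_j| are at most (2^{j+2} j)^{j²}; and (3) ‖A − A^{𝒫_j,𝒬_j}‖_□ ≤ 2j⁻¹ + 6j³·2⁻ʲ. -/

import Mathlib

open Filter MeasureTheory
open scoped Topology

/-- The ℓ∞ norm of a matrix: the maximum absolute value of its entries. -/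
noncomputable def linfNorm {m n : ℕ} (A : Matrix (Fin m) (Fin n) ℝ) : ℝ :=
  ⨆ i, ⨆ j, |A i j|

/-- The averaged Frobenius norm ‖A‖_F̄ = √( (1/(mn)) ∑ aᵢⱼ² ). -/
noncomputable def avgFrobNorm {m n : ℕ} (A : Matrix (Fin m) (Fin n) ℝ) : ℝ :=
  Real.sqrt ((∑ i, ∑ j, (A i j) ^ 2) / (m * n))

/-- The (normalized) cut norm ‖A‖_□ = (1/(mn)) max{ |xᵀAy| : ‖x‖_∞ ≤ 1, ‖y‖_∞ ≤ 1 }. -/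
noncomputable def cutNorm {m n : ℕ} (A : Matrix (Fin m) (Fin n) ℝ) : ℝ :=
  sSup {r : ℝ | ∃ (x : Fin m → ℝ) (y : Fin n → ℝ),
    (∀ i, |x i| ≤ 1) ∧ (∀ j, |y j| ≤ 1) ∧
    r = |∑ i, ∑ j, x i * A i j * y j| / (m * n)}

open scoped Classical in
/-- The block-averaged matrix A^{𝒫,𝒬}: each entry is replaced by the average of A over
the block (equivalence class of rows × equivalence class of columns) containing it, where
the partitions 𝒫, 𝒬 are encoded as setoids (equivalence relations). -/
noncomputable def blockAvg {m n : ℕ} (A : Matrix (Fin m) (Fin n) ℝ)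
    (P : Setoid (Fin m)) (Q : Setoid (Fin n)) : Matrix (Fin m) (Fin n) ℝ :=
  fun i j =>
    (∑ i' ∈ Finset.univ.filter (fun i' => P.r i i'),
      ∑ j' ∈ Finset.univ.filter (fun j' => Q.r j j'), A i' j') /
    (((Finset.univ.filter (fun i' => P.r i i')).card : ℝ) *
      ((Finset.univ.filter (fun j' => Q.r j j')).card : ℝ))

/-!
Frieze–Kannan energy increment. The energy of `(𝒫, 𝒬)` is the mean square of `A^{𝒫,𝒬}`; it lies
in `[0, 1]` and, by Pythagoras, grows under refinement by the mean square of the difference of the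
two block averages. If `‖A - A^{𝒫,𝒬}‖_□ > ε`, some rectangle `S × T` carries
`|∑_{S×T} (A - A^{𝒫,𝒬})| > ε m n / 4`; refining both partitions by `S` and `T` at most doubles the
number of parts and, by Cauchy–Schwarz, raises the energy by at least `ε² / 16`. Running this with
thresholds `2 / j` for `j = 2, 3, …` yields nested partitions with cut-norm error at most `2 / j`
after at most `4 j²` refinements in total, hence at most `2^(4 j²) ≤ (2^(j+2) j)^(j²)` parts; at
`j = 1` the trivial partitions already suffice.
-/

open Finset
open scoped BigOperators

namespace Setoid

variable {α : Type*} [Fintype α]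

open scoped Classical in
noncomputable def classFinset (P : Setoid α) (i : α) : Finset α :=
  univ.filter (P i ·)

variable {P : Setoid α} {i i' : α}

@[simp]
theorem mem_classFinset : i' ∈ P.classFinset i ↔ P i i' := by
  simp [classFinset]

theorem classFinset_nonempty (P : Setoid α) (i : α) : (P.classFinset i).Nonempty :=
  ⟨i, mem_classFinset.2 (P.refl i)⟩

theorem classFinset_eq_of_rel (h : P i i') : P.classFinset i = P.classFinset i' := by
  ext a
  simp only [mem_classFinset]
  exact ⟨P.trans (P.symm h), P.trans h⟩

theorem sum_mul_expect_classFinset (w g : α → ℝ) (hw : ∀ i i', P i i' → w i = w i') :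
    ∑ i, w i * 𝔼 i' ∈ P.classFinset i, g i' = ∑ i, w i * g i := by
  have hcard (i : α) : ((P.classFinset i).card : ℝ) ≠ 0 := by
    exact_mod_cast (P.classFinset_nonempty i).card_pos.ne'
  calc ∑ i, w i * 𝔼 i' ∈ P.classFinset i, g i'
      = ∑ i, ∑ i' ∈ P.classFinset i, w i' * g i' / (P.classFinset i').card := by
        refine sum_congr rfl fun i _ => ?_
        rw [expect_eq_sum_div_card, mul_div_assoc', mul_sum, sum_div]
        refine sum_congr rfl fun i' hi' => ?_
        rw [hw i i' (mem_classFinset.1 hi'), classFinset_eq_of_rel (mem_classFinset.1 hi')]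
    _ = ∑ i', ∑ _i ∈ P.classFinset i', w i' * g i' / (P.classFinset i').card :=
        sum_comm' fun i i' => by simp [P.comm]
    _ = ∑ i, w i * g i := by
        refine sum_congr rfl fun i _ => ?_
        rw [sum_const, nsmul_eq_mul, mul_div_cancel₀ _ (hcard i)]

end Setoid

variable {m n : ℕ}

theorem blockAvg_eq_expect (A : Matrix (Fin m) (Fin n) ℝ) (P : Setoid (Fin m))
    (Q : Setoid (Fin n)) (i : Fin m) (j : Fin n) :
    blockAvg A P Q i j = 𝔼 i' ∈ P.classFinset i, 𝔼 j' ∈ Q.classFinset j, A i' j' := by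
  simp only [blockAvg, expect_eq_sum_div_card, ← sum_div, div_div, mul_comm]
  rfl

theorem blockAvg_congr (A : Matrix (Fin m) (Fin n) ℝ) {P : Setoid (Fin m)} {Q : Setoid (Fin n)}
    {i i' : Fin m} {j j' : Fin n} (hi : P i i') (hj : Q j j') :
    blockAvg A P Q i j = blockAvg A P Q i' j' := by
  rw [blockAvg_eq_expect, blockAvg_eq_expect, Setoid.classFinset_eq_of_rel hi,
    Setoid.classFinset_eq_of_rel hj]

theorem abs_blockAvg_le {A : Matrix (Fin m) (Fin n) ℝ} (hA : ∀ i j, |A i j| ≤ 1)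
    (P : Setoid (Fin m)) (Q : Setoid (Fin n)) (i : Fin m) (j : Fin n) :
    |blockAvg A P Q i j| ≤ 1 := by
  rw [blockAvg_eq_expect]
  refine (abs_expect_le _ _).trans (expect_le (P.classFinset_nonempty i) fun i' _ => ?_)
  exact (abs_expect_le _ _).trans (expect_le (Q.classFinset_nonempty j) fun j' _ => hA i' j')

theorem sum_mul_blockAvg (A : Matrix (Fin m) (Fin n) ℝ) (W : Fin m → Fin n → ℝ) (P : Setoid (Fin m))
    (Q : Setoid (Fin n)) (hW : ∀ i i' j j', P i i' → Q j j' → W i j = W i' j') :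
    ∑ i, ∑ j, W i j * blockAvg A P Q i j = ∑ i, ∑ j, W i j * A i j := by
  simp only [blockAvg_eq_expect]
  rw [sum_comm]
  simp only [Setoid.sum_mul_expect_classFinset (P := P) (W · _) _
    fun i i' hi => hW i i' _ _ hi (Q.refl _)]
  rw [sum_comm]
  simp only [Setoid.sum_mul_expect_classFinset (P := Q) (W _ ·) _
    fun j j' hj => hW _ _ j j' (P.refl _) hj]

theorem sum_blockAvg_inf_ker_mem (A : Matrix (Fin m) (Fin n) ℝ) (P : Setoid (Fin m))
    (Q : Setoid (Fin n)) (S : Finset (Fin m)) (T : Finset (Fin n)) :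
    ∑ i ∈ S, ∑ j ∈ T, blockAvg A (P ⊓ Setoid.ker (· ∈ S)) (Q ⊓ Setoid.ker (· ∈ T)) i j =
      ∑ i ∈ S, ∑ j ∈ T, A i j := by
  have h := sum_mul_blockAvg A (fun i j => if i ∈ S then if j ∈ T then (1 : ℝ) else 0 else 0)
    (P ⊓ Setoid.ker (· ∈ S)) (Q ⊓ Setoid.ker (· ∈ T)) fun i i' j j' hi hj => by
      simp only [Setoid.inf_iff_and, Setoid.ker_def] at hi hj
      simp only [hi.2, hj.2]
  simpa [Finset.sum_ite_mem] using h

noncomputable def energy (A : Matrix (Fin m) (Fin n) ℝ) (P : Setoid (Fin m))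
    (Q : Setoid (Fin n)) : ℝ :=
  (∑ i, ∑ j, blockAvg A P Q i j ^ 2) / (m * n)

theorem energy_nonneg (A : Matrix (Fin m) (Fin n) ℝ) (P : Setoid (Fin m)) (Q : Setoid (Fin n)) :
    0 ≤ energy A P Q := by
  unfold energy
  positivity

theorem energy_le_one {A : Matrix (Fin m) (Fin n) ℝ} (hA : ∀ i j, |A i j| ≤ 1)
    (P : Setoid (Fin m)) (Q : Setoid (Fin n)) : energy A P Q ≤ 1 := by
  refine div_le_one_of_le₀ ?_ (by positivity)
  calc ∑ i, ∑ j, blockAvg A P Q i j ^ 2 ≤ ∑ _i : Fin m, ∑ _j : Fin n, (1 : ℝ) :=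
        sum_le_sum fun i _ => sum_le_sum fun j _ =>
          (sq_le_one_iff_abs_le_one _).2 (abs_blockAvg_le hA P Q i j)
    _ = m * n := by simp

/-- Pythagoras for the nested orthogonal projections `A ↦ A^{P,Q}`. -/
theorem energy_eq_add_of_le (A : Matrix (Fin m) (Fin n) ℝ) {P P' : Setoid (Fin m)}
    {Q Q' : Setoid (Fin n)} (hP : P' ≤ P) (hQ : Q' ≤ Q) :
    energy A P' Q' = energy A P Q +
      (∑ i, ∑ j, (blockAvg A P' Q' i j - blockAvg A P Q i j) ^ 2) / (m * n) := by
  set B := blockAvg A P Q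
  set C := blockAvg A P' Q'
  have hBB : ∑ i, ∑ j, B i j * B i j = ∑ i, ∑ j, B i j * A i j :=
    sum_mul_blockAvg A B P Q fun _ _ _ _ hi hj => blockAvg_congr A hi hj
  have hCC : ∑ i, ∑ j, C i j * C i j = ∑ i, ∑ j, C i j * A i j :=
    sum_mul_blockAvg A C P' Q' fun _ _ _ _ hi hj => blockAvg_congr A hi hj
  have hBC : ∑ i, ∑ j, B i j * C i j = ∑ i, ∑ j, B i j * A i j :=
    sum_mul_blockAvg A B P' Q' fun _ _ _ _ hi hj => blockAvg_congr A (hP hi) (hQ hj)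
  have hsq : ∑ i, ∑ j, C i j ^ 2 = ∑ i, ∑ j, B i j ^ 2 + ∑ i, ∑ j, (C i j - B i j) ^ 2 := by
    have expand : ∑ i, ∑ j, (C i j - B i j) ^ 2 =
        ∑ i, ∑ j, C i j * C i j - 2 * ∑ i, ∑ j, B i j * C i j + ∑ i, ∑ j, B i j * B i j := by
      simp only [mul_sum, ← sum_sub_distrib, ← sum_add_distrib]
      exact sum_congr rfl fun i _ => sum_congr rfl fun j _ => by ring
    simp only [sq] at expand ⊢
    linarith
  rw [energy, energy, hsq, add_div]

theorem abs_sum_mul_mul_le_sum_abs (M : Matrix (Fin m) (Fin n) ℝ) {x : Fin m → ℝ}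
    {y : Fin n → ℝ} (hx : ∀ i, |x i| ≤ 1) (hy : ∀ j, |y j| ≤ 1) :
    |∑ i, ∑ j, x i * M i j * y j| ≤ ∑ i, ∑ j, |M i j| := by
  refine (abs_sum_le_sum_abs _ _).trans (sum_le_sum fun i _ =>
    (abs_sum_le_sum_abs _ _).trans (sum_le_sum fun j _ => ?_))
  calc |x i * M i j * y j| = |x i| * |M i j| * |y j| := by rw [abs_mul, abs_mul]
    _ ≤ 1 * |M i j| * 1 := by gcongr; exacts [hx i, hy j]
    _ = |M i j| := by ring

theorem cutNorm_le_of_forall {M : Matrix (Fin m) (Fin n) ℝ} {c : ℝ} (hc : 0 ≤ c)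
    (h : ∀ (x : Fin m → ℝ) (y : Fin n → ℝ), (∀ i, |x i| ≤ 1) → (∀ j, |y j| ≤ 1) →
      |∑ i, ∑ j, x i * M i j * y j| / (m * n) ≤ c) :
    cutNorm M ≤ c := by
  refine Real.sSup_le ?_ hc
  rintro _ ⟨x, y, hx, hy, rfl⟩
  exact h x y hx hy

theorem cutNorm_le_of_abs_le {M : Matrix (Fin m) (Fin n) ℝ} {c : ℝ} (hc : 0 ≤ c)
    (hM : ∀ i j, |M i j| ≤ c) : cutNorm M ≤ c := by
  refine cutNorm_le_of_forall hc fun x y hx hy => div_le_of_le_mul₀ (by positivity) hc ?_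
  calc |∑ i, ∑ j, x i * M i j * y j| ≤ ∑ i, ∑ j, |M i j| := abs_sum_mul_mul_le_sum_abs M hx hy
    _ ≤ ∑ _i : Fin m, ∑ _j : Fin n, c := sum_le_sum fun i _ => sum_le_sum fun j _ => hM i j
    _ = c * (m * n) := by simp only [sum_const, card_univ, Fintype.card_fin, nsmul_eq_mul]; ring

theorem cast_mul_pos_of_cutNorm_pos {M : Matrix (Fin m) (Fin n) ℝ} (h : 0 < cutNorm M) :
    0 < (m : ℝ) * n := by
  by_contra hmn
  have hzero : (m : ℝ) * n = 0 := le_antisymm (not_lt.1 hmn) (by positivity)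
  exact h.not_ge (cutNorm_le_of_forall le_rfl fun _ _ _ _ => by rw [hzero, div_zero])

theorem exists_lt_of_lt_cutNorm {M : Matrix (Fin m) (Fin n) ℝ} {ε : ℝ} (h : ε < cutNorm M) :
    ∃ (x : Fin m → ℝ) (y : Fin n → ℝ), (∀ i, |x i| ≤ 1) ∧ (∀ j, |y j| ≤ 1) ∧
      ε < |∑ i, ∑ j, x i * M i j * y j| / (m * n) := by
  obtain ⟨_, ⟨x, y, hx, hy, rfl⟩, hlt⟩ :=
    exists_lt_of_lt_csSup (by exact ⟨_, 0, 0, by simp, by simp, rfl⟩) h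
  exact ⟨x, y, hx, hy, hlt⟩

theorem exists_finset_abs_sum_mul_le {ι : Type*} [Fintype ι] (c : ι → ℝ) :
    ∃ S : Finset ι, ∀ x : ι → ℝ, (∀ i, |x i| ≤ 1) →
      |∑ i, x i * c i| ≤ 2 * |∑ i ∈ S, c i| := by
  classical
  set Spos := univ.filter (0 ≤ c ·)
  set Sneg := univ.filter (¬ 0 ≤ c ·)
  have hsplit : ∑ i, |c i| = |∑ i ∈ Spos, c i| + |∑ i ∈ Sneg, c i| := by
    rw [← sum_filter_add_sum_filter_not univ (0 ≤ c ·), ← abs_neg (∑ i ∈ Sneg, c i),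
      ← sum_neg_distrib,
      abs_sum_of_nonneg fun i hi => (mem_filter.1 hi).2,
      abs_sum_of_nonneg fun i hi => neg_nonneg.2 (not_le.1 (mem_filter.1 hi).2).le]
    congr 1
    · exact sum_congr rfl fun i hi => abs_of_nonneg (mem_filter.1 hi).2
    · exact sum_congr rfl fun i hi => abs_of_neg (not_le.1 (mem_filter.1 hi).2)
  have hx (x : ι → ℝ) (hx : ∀ i, |x i| ≤ 1) : |∑ i, x i * c i| ≤ ∑ i, |c i| :=
    (abs_sum_le_sum_abs _ _).trans (sum_le_sum fun i _ => by
      rw [abs_mul]; exact mul_le_of_le_one_left (abs_nonneg _) (hx i))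
  rcases le_total |∑ i ∈ Spos, c i| |∑ i ∈ Sneg, c i| with hle | hle
  · exact ⟨Sneg, fun x hx' => (hx x hx').trans (by linarith)⟩
  · exact ⟨Spos, fun x hx' => (hx x hx').trans (by linarith)⟩

theorem exists_finset_lt_abs_sum_of_lt_cutNorm {M : Matrix (Fin m) (Fin n) ℝ} {ε : ℝ}
    (hε : 0 ≤ ε) (h : ε < cutNorm M) :
    ∃ (S : Finset (Fin m)) (T : Finset (Fin n)), ε * (m * n) < 4 * |∑ i ∈ S, ∑ j ∈ T, M i j| := by
  obtain ⟨x, y, hx, hy, hxy⟩ := exists_lt_of_lt_cutNorm h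
  rw [lt_div_iff₀ (cast_mul_pos_of_cutNorm_pos (hε.trans_lt h))] at hxy
  obtain ⟨S, hS⟩ := exists_finset_abs_sum_mul_le fun i => ∑ j, M i j * y j
  obtain ⟨T, hT⟩ := exists_finset_abs_sum_mul_le fun j => ∑ i ∈ S, M i j
  refine ⟨S, T, hxy.trans_le ?_⟩
  calc |∑ i, ∑ j, x i * M i j * y j| = |∑ i, x i * ∑ j, M i j * y j| := by
        simp only [mul_sum, mul_assoc]
    _ ≤ 2 * |∑ i ∈ S, ∑ j, M i j * y j| := hS x hx
    _ = 2 * |∑ j, y j * ∑ i ∈ S, M i j| := by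
        rw [sum_comm]; simp only [mul_sum, mul_comm]
    _ ≤ 2 * (2 * |∑ j ∈ T, ∑ i ∈ S, M i j|) := by gcongr; exact hT y hy
    _ = 4 * |∑ i ∈ S, ∑ j ∈ T, M i j| := by rw [sum_comm]; ring

theorem sq_sum_sum_le_card_mul_sum_sum_sq {ι κ : Type*} [Fintype ι] [Fintype κ]
    (D : ι → κ → ℝ) (S : Finset ι) (T : Finset κ) :
    (∑ i ∈ S, ∑ j ∈ T, D i j) ^ 2 ≤ (Fintype.card ι * Fintype.card κ) * ∑ i, ∑ j, D i j ^ 2 := by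
  rw [← sum_product', ← Fintype.sum_prod_type']
  calc (∑ p ∈ S ×ˢ T, D p.1 p.2) ^ 2 ≤ (S ×ˢ T).card * ∑ p ∈ S ×ˢ T, D p.1 p.2 ^ 2 :=
        sq_sum_le_card_mul_sum_sq
    _ ≤ (Fintype.card ι * Fintype.card κ) * ∑ p : ι × κ, D p.1 p.2 ^ 2 := by
        gcongr
        · exact_mod_cast (card_le_univ _).trans_eq (Fintype.card_prod ι κ)
        · exact subset_univ _

theorem Setoid.card_quotient_inf_ker_le {α β : Type*} [Finite α] [Finite β] (P : Setoid α)
    (f : α → β) :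
    Nat.card (Quotient (P ⊓ Setoid.ker f)) ≤ Nat.card (Quotient P) * Nat.card β := by
  have h : P ⊓ Setoid.ker f = Setoid.ker fun a => (Quotient.mk P a, f a) := by
    ext a b
    simp [Setoid.inf_iff_and, Setoid.ker_def, Quotient.eq]
  rw [h, Nat.card_congr (Setoid.quotientKerEquivRange _), ← Nat.card_prod]
  exact Finite.card_subtype_le _

theorem exists_energy_add_le_of_lt_cutNorm (A : Matrix (Fin m) (Fin n) ℝ) (P : Setoid (Fin m))
    (Q : Setoid (Fin n)) {ε : ℝ} (hε : 0 ≤ ε) (h : ε < cutNorm (A - blockAvg A P Q)) :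
    ∃ (S : Finset (Fin m)) (T : Finset (Fin n)),
      energy A P Q + ε ^ 2 / 16 ≤ energy A (P ⊓ Setoid.ker (· ∈ S)) (Q ⊓ Setoid.ker (· ∈ T)) := by
  have hmn := cast_mul_pos_of_cutNorm_pos (hε.trans_lt h)
  obtain ⟨S, T, hST⟩ := exists_finset_lt_abs_sum_of_lt_cutNorm hε h
  refine ⟨S, T, ?_⟩
  rw [energy_eq_add_of_le A inf_le_left inf_le_left, add_le_add_iff_left, le_div_iff₀ hmn]
  set B := blockAvg A P Q
  set C := blockAvg A (P ⊓ Setoid.ker (· ∈ S)) (Q ⊓ Setoid.ker (· ∈ T))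
  set X := ∑ i ∈ S, ∑ j ∈ T, (A - B) i j
  have hX : X = ∑ i ∈ S, ∑ j ∈ T, (C i j - B i j) := by
    simp only [X, C, Matrix.sub_apply, sum_sub_distrib, sum_blockAvg_inf_ker_mem]
  have hCS := sq_sum_sum_le_card_mul_sum_sum_sq (fun i j => C i j - B i j) S T
  rw [← hX, Fintype.card_fin, Fintype.card_fin] at hCS
  have hsq : (ε * (m * n)) ^ 2 ≤ 16 * X ^ 2 := by
    calc (ε * (m * n)) ^ 2 ≤ (4 * |X|) ^ 2 := pow_le_pow_left₀ (by positivity) hST.le 2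
      _ = 16 * X ^ 2 := by rw [mul_pow, sq_abs]; norm_num
  nlinarith

theorem Setoid.card_quotient_inf_ker_prop_le {α : Type*} [Finite α] (P : Setoid α)
    (p : α → Prop) : Nat.card (Quotient (P ⊓ Setoid.ker p)) ≤ 2 * Nat.card (Quotient P) := by
  simpa [mul_comm] using P.card_quotient_inf_ker_le p

theorem exists_le_cutNorm_sub_blockAvg_le {A : Matrix (Fin m) (Fin n) ℝ}
    (hA : ∀ i j, |A i j| ≤ 1) {ε : ℝ} (hε : 0 < ε) (P₀ : Setoid (Fin m)) (Q₀ : Setoid (Fin n)) :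
    ∃ P ≤ P₀, ∃ Q ≤ Q₀, ∃ s : ℕ,
      Nat.card (Quotient P) ≤ 2 ^ s * Nat.card (Quotient P₀) ∧
      Nat.card (Quotient Q) ≤ 2 ^ s * Nat.card (Quotient Q₀) ∧
      energy A P₀ Q₀ + s * (ε ^ 2 / 16) ≤ energy A P Q ∧
      cutNorm (A - blockAvg A P Q) ≤ ε := by
  -- Induct on a budget of `k` steps: `k` gains of `ε² / 16` would push the energy above `1`.
  obtain ⟨k, hk⟩ := exists_nat_gt (1 / (ε ^ 2 / 16))
  have hk' : 1 < energy A P₀ Q₀ + k * (ε ^ 2 / 16) := by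
    rw [div_lt_iff₀ (by positivity)] at hk
    linarith [energy_nonneg A P₀ Q₀]
  clear hk
  induction k generalizing P₀ Q₀ with
  | zero =>
    simp only [CharP.cast_eq_zero, zero_mul, add_zero] at hk'
    exact absurd (energy_le_one hA P₀ Q₀) hk'.not_ge
  | succ k ih =>
    by_cases hcut : cutNorm (A - blockAvg A P₀ Q₀) ≤ ε
    · exact ⟨P₀, le_rfl, Q₀, le_rfl, 0, by simp, by simp, by simp, hcut⟩
    obtain ⟨S, T, hST⟩ := exists_energy_add_le_of_lt_cutNorm A P₀ Q₀ hε.le (not_le.1 hcut)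
    obtain ⟨P, hP, Q, hQ, s, hPcard, hQcard, henergy, hcut'⟩ :=
      ih (P₀ ⊓ Setoid.ker (· ∈ S)) (Q₀ ⊓ Setoid.ker (· ∈ T))
      (by push_cast at hk'; linarith)
    refine ⟨P, hP.trans inf_le_left, Q, hQ.trans inf_le_left, s + 1, ?_, ?_, ?_, hcut'⟩
    · calc Nat.card (Quotient P) ≤ 2 ^ s * (2 * Nat.card (Quotient P₀)) :=
            hPcard.trans (Nat.mul_le_mul_left _ (P₀.card_quotient_inf_ker_prop_le _))
        _ = 2 ^ (s + 1) * Nat.card (Quotient P₀) := by ring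
    · calc Nat.card (Quotient Q) ≤ 2 ^ s * (2 * Nat.card (Quotient Q₀)) :=
            hQcard.trans (Nat.mul_le_mul_left _ (Q₀.card_quotient_inf_ker_prop_le _))
        _ = 2 ^ (s + 1) * Nat.card (Quotient Q₀) := by ring
    · push_cast
      linarith

theorem two_pow_four_mul_sq_le {j : ℕ} (hj : 2 ≤ j) :
    2 ^ (4 * j ^ 2) ≤ (2 ^ (j + 2) * j) ^ (j ^ 2) := by
  rw [pow_mul]
  refine Nat.pow_le_pow_left ?_ _
  calc 2 ^ 4 = 2 ^ 4 * 1 := rfl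
    _ ≤ 2 ^ (j + 2) * j := Nat.mul_le_mul (Nat.pow_le_pow_right two_pos (by omega)) (by omega)

/-- The partitions reached at stage `j` after `t` refinement steps in total. Every step taken
up to stage `j` has threshold at least `2 / j`, hence gains at least `1 / (4 j²)` energy. -/
structure IsRefinementStage (A : Matrix (Fin m) (Fin n) ℝ) (j : ℕ) (P : Setoid (Fin m))
    (Q : Setoid (Fin n)) (t : ℕ) : Prop where
  card_row_le_two_pow : Nat.card (Quotient P) ≤ 2 ^ t
  card_col_le_two_pow : Nat.card (Quotient Q) ≤ 2 ^ t
  card_row_le : Nat.card (Quotient P) ≤ (2 ^ (j + 2) * j) ^ (j ^ 2)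
  card_col_le : Nat.card (Quotient Q) ≤ (2 ^ (j + 2) * j) ^ (j ^ 2)
  steps_div_le_energy : (t : ℝ) / (4 * j ^ 2) ≤ energy A P Q
  cutNorm_le : cutNorm (A - blockAvg A P Q) ≤ 2 / j

theorem Setoid.card_quotient_top_le_one {α : Type*} [Finite α] :
    Nat.card (Quotient (⊤ : Setoid α)) ≤ 1 :=
  Finite.card_le_one_iff_subsingleton.2 ⟨by rintro ⟨a⟩ ⟨b⟩; exact Quot.sound trivial⟩

theorem isRefinementStage_one {A : Matrix (Fin m) (Fin n) ℝ} (hA : ∀ i j, |A i j| ≤ 1) :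
    IsRefinementStage A 1 ⊤ ⊤ 0 where
  card_row_le_two_pow := Setoid.card_quotient_top_le_one
  card_col_le_two_pow := Setoid.card_quotient_top_le_one
  card_row_le := Setoid.card_quotient_top_le_one.trans (by norm_num)
  card_col_le := Setoid.card_quotient_top_le_one.trans (by norm_num)
  steps_div_le_energy := by simpa using energy_nonneg A ⊤ ⊤
  cutNorm_le := by
    refine (cutNorm_le_of_abs_le zero_le_two fun i j => ?_).trans_eq (by norm_num)
    rw [Matrix.sub_apply]
    linarith [abs_sub (A i j) (blockAvg A ⊤ ⊤ i j), hA i j, abs_blockAvg_le hA ⊤ ⊤ i j]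

theorem IsRefinementStage.exists_succ {A : Matrix (Fin m) (Fin n) ℝ} (hA : ∀ i j, |A i j| ≤ 1)
    {j t : ℕ} {P : Setoid (Fin m)} {Q : Setoid (Fin n)} (hj : 1 ≤ j)
    (h : IsRefinementStage A j P Q t) :
    ∃ P' ≤ P, ∃ Q' ≤ Q, ∃ t', IsRefinementStage A (j + 1) P' Q' t' := by
  have hj' : (1 : ℝ) ≤ j := by exact_mod_cast hj
  obtain ⟨P', hP', Q', hQ', s, hPcard, hQcard, henergy, hcut⟩ :=
    exists_le_cutNorm_sub_blockAvg_le hA (ε := 2 / (j + 1)) (by positivity) P Q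
  have hgain : (2 / ((j : ℝ) + 1)) ^ 2 / 16 = 1 / (4 * (j + 1) ^ 2) := by
    field_simp
    ring
  have hsteps : ((t + s : ℕ) : ℝ) / (4 * (j + 1) ^ 2) ≤ energy A P' Q' := by
    have hold : (t : ℝ) / (4 * (j + 1) ^ 2) ≤ t / (4 * j ^ 2) := by
      gcongr
      linarith
    rw [hgain, mul_one_div] at henergy
    push_cast
    rw [add_div]
    linarith [h.steps_div_le_energy]
  have hts : t + s ≤ 4 * (j + 1) ^ 2 := by
    have := hsteps.trans (energy_le_one hA P' Q')
    rw [div_le_one (by positivity)] at this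
    exact_mod_cast this
  have hcard {c c₀ : ℕ} (hc : c ≤ 2 ^ s * c₀) (hc₀ : c₀ ≤ 2 ^ t) : c ≤ 2 ^ (t + s) :=
    hc.trans ((Nat.mul_le_mul_left _ hc₀).trans_eq (by ring))
  have hbound {c : ℕ} (hc : c ≤ 2 ^ (t + s)) : c ≤ (2 ^ (j + 1 + 2) * (j + 1)) ^ ((j + 1) ^ 2) :=
    (hc.trans (Nat.pow_le_pow_right two_pos hts)).trans (two_pow_four_mul_sq_le (by omega))
  refine ⟨P', hP', Q', hQ', t + s, hcard hPcard h.card_row_le_two_pow,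
    hcard hQcard h.card_col_le_two_pow, hbound (hcard hPcard h.card_row_le_two_pow),
    hbound (hcard hQcard h.card_col_le_two_pow), by exact_mod_cast hsteps, ?_⟩
  exact hcut.trans_eq (by push_cast; rfl)

theorem exists_seq_of_forall_exists {X : Type*} {I : ℕ → X → Prop} {R : X → X → Prop} {x₀ : X}
    (h₀ : I 0 x₀) (step : ∀ k x, I k x → ∃ y, I (k + 1) y ∧ R y x) :
    ∃ f : ℕ → X, ∀ k, I k (f k) ∧ R (f (k + 1)) (f k) := by
  choose g hg using step
  let f : (k : ℕ) → {x // I k x} :=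
    fun k => Nat.rec ⟨x₀, h₀⟩ (fun k x => ⟨g k x x.2, (hg k x x.2).1⟩) k
  exact ⟨fun k => (f k).1, fun k => ⟨(f k).2, (hg k _ (f k).2).2⟩⟩

theorem abs_le_linfNorm {m n : ℕ} (A : Matrix (Fin m) (Fin n) ℝ) (i : Fin m) (j : Fin n) :
    |A i j| ≤ linfNorm A :=
  (le_ciSup (Finite.bddAbove_range _) j).trans
    (le_ciSup (f := fun i => ⨆ j, |A i j|) (Finite.bddAbove_range _) i)

/-- Lemma 10.1: for any m×n matrix A with ‖A‖_∞ ≤ 1 there are sequences of partitions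
𝒫_j of the rows and 𝒬_j of the columns (encoded as setoids, where "𝒫_{j+1} refines 𝒫_j"
means every 𝒫_{j+1}-equivalence implies the corresponding 𝒫_j-equivalence, and the number
of parts is the number of equivalence classes) such that for every j ≥ 1: 𝒫_{j+1}, 𝒬_{j+1}
refine 𝒫_j, 𝒬_j; the numbers of parts are at most (2^{j+2} j)^{j²}; and
‖A − A^{𝒫_j,𝒬_j}‖_□ ≤ 2j⁻¹ + 6j³2⁻ʲ. -/
theorem stmt10 {m n : ℕ} (A : Matrix (Fin m) (Fin n) ℝ) (hA : linfNorm A ≤ 1) :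
    ∃ (P : ℕ → Setoid (Fin m)) (Q : ℕ → Setoid (Fin n)),
      ∀ j : ℕ, 1 ≤ j →
        ((∀ x y, (P (j + 1)).r x y → (P j).r x y) ∧
          (∀ x y, (Q (j + 1)).r x y → (Q j).r x y)) ∧
        (Nat.card (Quotient (P j)) ≤ (2 ^ (j + 2) * j) ^ (j ^ 2) ∧
          Nat.card (Quotient (Q j)) ≤ (2 ^ (j + 2) * j) ^ (j ^ 2)) ∧
        cutNorm (A - blockAvg A (P j) (Q j)) ≤ 2 / (j : ℝ) + 6 * (j : ℝ) ^ 3 / 2 ^ j := by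
  have hA' (i : Fin m) (j : Fin n) : |A i j| ≤ 1 := (abs_le_linfNorm A i j).trans hA
  obtain ⟨f, hf⟩ := exists_seq_of_forall_exists
    (I := fun k (x : Setoid (Fin m) × Setoid (Fin n) × ℕ) =>
      IsRefinementStage A (k + 1) x.1 x.2.1 x.2.2)
    (R := fun y x => y.1 ≤ x.1 ∧ y.2.1 ≤ x.2.1) (x₀ := (⊤, ⊤, 0)) (isRefinementStage_one hA')
    fun k x hx => by
      obtain ⟨P, hP, Q, hQ, t, h⟩ := hx.exists_succ hA' (Nat.le_add_left 1 k)
      exact ⟨(P, Q, t), h, hP, hQ⟩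
  -- `f k` is the stage `k + 1`.
  refine ⟨fun j => (f (j - 1)).1, fun j => (f (j - 1)).2.1, fun j hj => ?_⟩
  obtain ⟨k, rfl⟩ := Nat.exists_eq_add_of_le' hj
  obtain ⟨hstage, hP, hQ⟩ := hf k
  simp only [Nat.add_sub_cancel]
  refine ⟨⟨fun x y h => hP h, fun x y h => hQ h⟩, ⟨hstage.card_row_le, hstage.card_col_le⟩, ?_⟩
  exact hstage.cutNorm_le.trans (le_add_of_nonneg_right (by positivity))
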